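/- The fifteen SRBB matrices U₁,…,U₁₅ of order 4 are linearly independent over ℝ and span, over ℝ, the real vector space of all Hermitian 4×4 complex matrices of trace zero; equivalently, every traceless Hermitian 4×4 complex matrix is a unique ℝ-linear combination of U₁,…,U₁₅ (so that i·U₁,…,i·U₁₅ form a basis of the Lie algebra su(4)). -/
import Mathlib


open Matrix Complex

noncomputable def U₁ : Matrix (Fin 4) (Fin 4) ℂ :=
  !![0, 1, 0, 0; 1, 0, 0, 0; 0, 0, 1, 0; 0, 0, 0, -1]

noncomputable def U₂ : Matrix (Fin 4) (Fin 4) ℂ :=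
  !![0, -I, 0, 0; I, 0, 0, 0; 0, 0, 1, 0; 0, 0, 0, -1]

noncomputable def U₃ : Matrix (Fin 4) (Fin 4) ℂ :=
  !![1, 0, 0, 0; 0, -1, 0, 0; 0, 0, 1, 0; 0, 0, 0, -1]

noncomputable def U₄ : Matrix (Fin 4) (Fin 4) ℂ :=
  !![1, 0, 0, 0; 0, 0, 1, 0; 0, 1, 0, 0; 0, 0, 0, -1]

noncomputable def U₅ : Matrix (Fin 4) (Fin 4) ℂ :=
  !![0, 0, 1, 0; 0, 1, 0, 0; 1, 0, 0, 0; 0, 0, 0, -1]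

noncomputable def U₆ : Matrix (Fin 4) (Fin 4) ℂ :=
  !![1, 0, 0, 0; 0, 0, -I, 0; 0, I, 0, 0; 0, 0, 0, -1]

noncomputable def U₇ : Matrix (Fin 4) (Fin 4) ℂ :=
  !![0, 0, -I, 0; 0, 1, 0, 0; I, 0, 0, 0; 0, 0, 0, -1]

noncomputable def U₈ : Matrix (Fin 4) (Fin 4) ℂ :=
  !![1, 0, 0, 0; 0, 1, 0, 0; 0, 0, -1, 0; 0, 0, 0, -1]

noncomputable def U₉ : Matrix (Fin 4) (Fin 4) ℂ :=
  !![1, 0, 0, 0; 0, -1, 0, 0; 0, 0, 0, 1; 0, 0, 1, 0]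

noncomputable def U₁₀ : Matrix (Fin 4) (Fin 4) ℂ :=
  !![0, 0, 0, 1; 0, -1, 0, 0; 0, 0, 1, 0; 1, 0, 0, 0]

noncomputable def U₁₁ : Matrix (Fin 4) (Fin 4) ℂ :=
  !![1, 0, 0, 0; 0, 0, 0, 1; 0, 0, -1, 0; 0, 1, 0, 0]

noncomputable def U₁₂ : Matrix (Fin 4) (Fin 4) ℂ :=
  !![1, 0, 0, 0; 0, -1, 0, 0; 0, 0, 0, -I; 0, 0, I, 0]

noncomputable def U₁₃ : Matrix (Fin 4) (Fin 4) ℂ :=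
  !![0, 0, 0, -I; 0, -1, 0, 0; 0, 0, 1, 0; I, 0, 0, 0]

noncomputable def U₁₄ : Matrix (Fin 4) (Fin 4) ℂ :=
  !![1, 0, 0, 0; 0, 0, 0, -I; 0, 0, -1, 0; 0, I, 0, 0]

noncomputable def U₁₅ : Matrix (Fin 4) (Fin 4) ℂ :=
  !![1, 0, 0, 0; 0, -1, 0, 0; 0, 0, -1, 0; 0, 0, 0, 1]

/-- 4×4 permutation matrix exchanging the 2nd and 4th standard basis vectors. -/
def P₂₄ : Matrix (Fin 4) (Fin 4) ℂ :=
  !![1, 0, 0, 0; 0, 0, 0, 1; 0, 0, 1, 0; 0, 1, 0, 0]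

/-- 4×4 permutation matrix exchanging the 2nd and 3rd standard basis vectors. -/
def P₂₃ : Matrix (Fin 4) (Fin 4) ℂ :=
  !![1, 0, 0, 0; 0, 0, 1, 0; 0, 1, 0, 0; 0, 0, 0, 1]

/-- The fifteen SRBB matrices of order 4. -/
noncomputable def SRBB : Fin 15 → Matrix (Fin 4) (Fin 4) ℂ :=
  ![U₁, U₂, U₃, U₄, U₅, U₆, U₇, U₈, U₉, U₁₀, U₁₁, U₁₂, U₁₃, U₁₄, U₁₅]

private lemma fin15_sum {M : Type*} [AddCommMonoid M] (f : Fin 15 → M) :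
    ∑ j : Fin 15, f j = f 0 + f 1 + f 2 + f 3 + f 4 + f 5 + f 6 + f 7 + f 8 + f 9 +
      f 10 + f 11 + f 12 + f 13 + f 14 := by
  simp [Fin.sum_univ_succ, show (Fin.succ 2 : Fin 15)=3 from rfl,
    show ((3:Fin 15).succ)=4 from rfl, show ((4:Fin 15).succ)=5 from rfl,
    show ((5:Fin 15).succ)=6 from rfl, show ((6:Fin 15).succ)=7 from rfl,
    show ((7:Fin 15).succ)=8 from rfl, show ((8:Fin 15).succ)=9 from rfl,
    show ((9:Fin 15).succ)=10 from rfl, show ((10:Fin 15).succ)=11 from rfl,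
    show ((11:Fin 15).succ)=12 from rfl, show ((12:Fin 15).succ)=13 from rfl,
    show ((13:Fin 15).succ)=14 from rfl]
  abel

set_option maxHeartbeats 2000000 in
private lemma sum_eq (c : Fin 15 → ℝ) :
    ∑ j : Fin 15, c j • SRBB j =
    !![(c 2 : ℂ) + c 3 + c 5 + c 7 + c 8 + c 10 + c 11 + c 13 + c 14,
        (c 0 : ℂ) - c 1 * I, (c 4 : ℂ) - c 6 * I, (c 9 : ℂ) - c 12 * I;
      (c 0 : ℂ) + c 1 * I,
        -(c 2 : ℂ) + c 4 + c 6 + c 7 - c 8 - c 9 - c 11 - c 12 - c 14,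
        (c 3 : ℂ) - c 5 * I, (c 10 : ℂ) - c 13 * I;
      (c 4 : ℂ) + c 6 * I, (c 3 : ℂ) + c 5 * I,
        (c 0 : ℂ) + c 1 + c 2 - c 7 + c 9 - c 10 + c 12 - c 13 - c 14,
        (c 8 : ℂ) - c 11 * I;
      (c 9 : ℂ) + c 12 * I, (c 10 : ℂ) + c 13 * I, (c 8 : ℂ) + c 11 * I,
        -(c 0 : ℂ) - c 1 - c 2 - c 3 - c 4 - c 5 - c 6 - c 7 + c 14] := by
  rw [fin15_sum]
  simp only [show SRBB 0 = U₁ from rfl, show SRBB 1 = U₂ from rfl,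
    show SRBB 2 = U₃ from rfl, show SRBB 3 = U₄ from rfl, show SRBB 4 = U₅ from rfl,
    show SRBB 5 = U₆ from rfl, show SRBB 6 = U₇ from rfl, show SRBB 7 = U₈ from rfl,
    show SRBB 8 = U₉ from rfl, show SRBB 9 = U₁₀ from rfl, show SRBB 10 = U₁₁ from rfl,
    show SRBB 11 = U₁₂ from rfl, show SRBB 12 = U₁₃ from rfl,
    show SRBB 13 = U₁₄ from rfl, show SRBB 14 = U₁₅ from rfl]
  ext i k
  fin_cases i <;> fin_cases k <;>
    · simp only [U₁, U₂, U₃, U₄, U₅, U₆, U₇, U₈, U₉, U₁₀, U₁₁, U₁₂, U₁₃, U₁₄, U₁₅,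
        Matrix.add_apply, Matrix.smul_apply, Complex.real_smul, Matrix.of_apply,
        Matrix.cons_val', Matrix.cons_val_zero, Matrix.cons_val_one,
        Matrix.cons_val_two, Matrix.cons_val_three, Matrix.head_cons,
        Matrix.tail_cons, Matrix.empty_val', Matrix.cons_val_fin_one,
        Matrix.head_fin_const, Fin.reduceFinMk, Fin.isValue,
        Nat.succ_eq_add_one, Nat.reduceAdd, Matrix.cons_val_succ,
        Fin.succ_zero_eq_one, Fin.succ_one_eq_two, Matrix.vecHead, Matrix.vecTail,
        Function.comp]
      ring

private lemma inj (c : Fin 15 → ℝ) (h : ∑ j : Fin 15, c j • SRBB j = 0) :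
    ∀ j, c j = 0 := by
  rw [sum_eq] at h
  have e01 := congrFun (congrFun h 0) 1
  have e02 := congrFun (congrFun h 0) 2
  have e03 := congrFun (congrFun h 0) 3
  have e12 := congrFun (congrFun h 1) 2
  have e13 := congrFun (congrFun h 1) 3
  have e23 := congrFun (congrFun h 2) 3
  have e00 := congrFun (congrFun h 0) 0
  have e11 := congrFun (congrFun h 1) 1
  have e22 := congrFun (congrFun h 2) 2
  simp [Complex.ext_iff] at e01 e02 e03 e12 e13 e23 e00 e11 e22
  obtain ⟨h0, h1⟩ := e01
  obtain ⟨h4, h6⟩ := e02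
  obtain ⟨h9, h12⟩ := e03
  obtain ⟨h3, h5⟩ := e12
  obtain ⟨h10, h13⟩ := e13
  obtain ⟨h8, h11⟩ := e23
  intro j
  fin_cases j <;> simp_all <;> linarith

private noncomputable def e0 (A : Matrix (Fin 4) (Fin 4) ℂ) : ℝ :=
  (A 0 0).re - ((A 1 2).re - (A 1 2).im + (A 2 3).re + (A 1 3).re
    - (A 2 3).im - (A 1 3).im)

private noncomputable def e1 (A : Matrix (Fin 4) (Fin 4) ℂ) : ℝ :=
  (A 1 1).re - ((A 0 2).re - (A 0 2).im - (A 2 3).re - (A 0 3).re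
    + (A 2 3).im + (A 0 3).im)

private noncomputable def e2 (A : Matrix (Fin 4) (Fin 4) ℂ) : ℝ :=
  (A 2 2).re - ((A 0 1).re - (A 0 1).im + (A 0 3).re - (A 1 3).re
    - (A 0 3).im + (A 1 3).im)

private noncomputable def coeff (A : Matrix (Fin 4) (Fin 4) ℂ) : Fin 15 → ℝ :=
  ![(A 0 1).re, -(A 0 1).im, (e0 A + e2 A) / 2, (A 1 2).re, (A 0 2).re,
    -(A 1 2).im, -(A 0 2).im, (e0 A + e1 A) / 2, (A 2 3).re, (A 0 3).re,
    (A 1 3).re, -(A 2 3).im, -(A 0 3).im, -(A 1 3).im, -(e1 A + e2 A) / 2]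

set_option maxHeartbeats 2000000 in
private lemma coeff_spec (A : Matrix (Fin 4) (Fin 4) ℂ) (hH : Aᴴ = A)
    (hT : A.trace = 0) : A = ∑ j : Fin 15, coeff A j • SRBB j := by
  have herm : ∀ i k, (A k i).re = (A i k).re ∧ (A k i).im = -(A i k).im := by
    intro i k
    have := congrFun (congrFun hH k) i
    simp [Matrix.conjTranspose_apply, Complex.ext_iff] at this
    exact ⟨this.1.symm, by linarith [this.2]⟩
  have diag : ∀ i, (A i i).im = 0 := by
    intro i
    have := (herm i i).2
    linarith
  have tr : (A 0 0).re + (A 1 1).re + (A 2 2).re + (A 3 3).re = 0 := by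
    have h : A 0 0 + A 1 1 + A 2 2 + A 3 3 = 0 := by
      rw [← hT]; simp [Matrix.trace, Fin.sum_univ_four, Matrix.diag]
    have := congrArg Complex.re h
    simpa using this
  rw [sum_eq]
  simp only [show coeff A 0 = (A 0 1).re from rfl,
    show coeff A 1 = -(A 0 1).im from rfl,
    show coeff A 2 = (e0 A + e2 A) / 2 from rfl,
    show coeff A 3 = (A 1 2).re from rfl,
    show coeff A 4 = (A 0 2).re from rfl,
    show coeff A 5 = -(A 1 2).im from rfl,
    show coeff A 6 = -(A 0 2).im from rfl,
    show coeff A 7 = (e0 A + e1 A) / 2 from rfl,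
    show coeff A 8 = (A 2 3).re from rfl,
    show coeff A 9 = (A 0 3).re from rfl,
    show coeff A 10 = (A 1 3).re from rfl,
    show coeff A 11 = -(A 2 3).im from rfl,
    show coeff A 12 = -(A 0 3).im from rfl,
    show coeff A 13 = -(A 1 3).im from rfl,
    show coeff A 14 = -(e1 A + e2 A) / 2 from rfl, e0, e1, e2]
  ext i k
  fin_cases i <;> fin_cases k <;>
    · simp only [Matrix.of_apply, Matrix.cons_val', Matrix.cons_val_zero,
        Matrix.cons_val_one, Matrix.cons_val_two, Matrix.cons_val_three,
        Matrix.head_cons, Matrix.tail_cons, Matrix.head_fin_const,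
        Matrix.empty_val', Matrix.cons_val_fin_one, Matrix.cons_val_succ,
        Fin.zero_eta, Fin.mk_one, Fin.reduceFinMk, Fin.isValue,
        Nat.succ_eq_add_one, Nat.reduceAdd, Fin.succ_zero_eq_one,
        Fin.succ_one_eq_two, Complex.ext_iff,
        Complex.add_re, Complex.add_im, Complex.sub_re, Complex.sub_im,
        Complex.neg_re, Complex.neg_im, Complex.mul_re, Complex.mul_im,
        Complex.ofReal_re, Complex.ofReal_im, Complex.I_re, Complex.I_im,
        Complex.div_ofNat_re, Complex.div_ofNat_im, Complex.ofReal_div,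
        Complex.ofReal_add, Complex.ofReal_neg, Complex.ofReal_sub,
        Complex.ofReal_ofNat]
      constructor
      · first
        | (rw [(herm _ _).1]; ring1)
        | (have h4 := tr; have d0 := diag 0; have d1 := diag 1
           have d2 := diag 2; have d3 := diag 3
           try ring_nf
           try ring_nf at h4 ⊢
           linarith)
        | ring1
      · first
        | (rw [(herm _ _).2]; ring1)
        | (have d0 := diag 0; have d1 := diag 1; have d2 := diag 2
           have d3 := diag 3; try ring_nf
           linarith)
        | ring1

theorem srbb_basis_of_traceless_hermitian :
    LinearIndependent ℝ SRBB ∧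
    ∀ A : Matrix (Fin 4) (Fin 4) ℂ, Aᴴ = A → A.trace = 0 →
      ∃! c : Fin 15 → ℝ, A = ∑ j : Fin 15, c j • SRBB j := by
  constructor
  · exact Fintype.linearIndependent_iff.2 inj
  · intro A hH hT
    refine ⟨coeff A, coeff_spec A hH hT, ?_⟩
    intro c2 hc2
    funext j
    have h0 : ∑ k : Fin 15, (c2 k - coeff A k) • SRBB k = 0 := by
      simp only [sub_smul, Finset.sum_sub_distrib]
      rw [← hc2, ← coeff_spec A hH hT, sub_self]
    have := inj _ h0 j
    linarith [this]
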